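/- Let A : ℝ → Matrix (Fin m) (Fin m) ℝ be a family of symmetric matrices with entries differentiable at θ₀, and suppose the operator norm of A(θ₀) is strictly less than 1. For n̄ ∈ ℕ^m define P(θ, n̄) = (det(I − A(θ)²))^{1/2} · Haf(A(θ)_{n̄})² / (n_1!⋯n_m!). Then θ ↦ P(θ, n̄) is differentiable at θ₀ with derivative −Tr[A (I − A²)^{-1} A'] · P(θ₀, n̄) + 2 · (det(I − A²))^{1/2}/(n_1!⋯n_m!) · Haf(A_{n̄}) · (d/dθ Haf(A(θ)_{n̄}))|_{θ₀}, all matrices evaluated at θ₀, with A' the entrywise derivative. -/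

import Mathlib

open Finset Matrix
open scoped Matrix.Norms.L2Operator

open scoped Classical in
/-- The hafnian of a matrix: the sum over all perfect matchings of the index set
(encoded as fixed-point-free involutions `σ`), of the product of the entries
`A i (σ i)` over the pairs `{i, σ i}` (each pair taken once, via `i < σ i`).
For an empty index type this is `1`, and for an odd-cardinality index type it is `0`. -/
noncomputable def hafnian {ι : Type*} [Fintype ι] [LinearOrder ι] {R : Type*} [CommRing R]
    (A : Matrix ι ι R) : R :=
  ∑ σ ∈ Finset.univ.filter
      (fun σ : Equiv.Perm ι => σ * σ = 1 ∧ ∀ i, σ i ≠ i),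
    ∏ i ∈ Finset.univ.filter (fun i => i < σ i), A i (σ i)

/-- The index type for `A_n̄` (row/column `i` repeated `n i` times), ordered
lexicographically. -/
instance repIdxFintype {M : ℕ} (n : Fin M → ℕ) : Fintype (Σₗ i : Fin M, Fin (n i)) :=
  inferInstanceAs (Fintype ((i : Fin M) × Fin (n i)))

/-- `A_n̄`: the matrix obtained from the `M × M` matrix `A` by repeating row and column `i`
exactly `n i` times (deleting them when `n i = 0`).  Note that `hafnian (repMat A n) = 0`
automatically when `Σ n_i` is odd. -/
def repMat {M : ℕ} {R : Type*} (A : Matrix (Fin M) (Fin M) R) (n : Fin M → ℕ) :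
    Matrix (Σₗ i : Fin M, Fin (n i)) (Σₗ i : Fin M, Fin (n i)) R :=
  A.submatrix (fun p => (ofLex p).1) (fun p => (ofLex p).1)
/-! Jacobi's formula `(det B)' = tr(adj B · B')` gives
`(√det B)' = ½ tr(B⁻¹ B') √det B` for `B = 1 - A²`, whose derivative is `-(A'A + AA')`.
As `A` commutes with `(1 - A²)⁻¹`, cyclicity of the trace turns `½ tr(B⁻¹ B')` into
`-tr(A (1 - A²)⁻¹ A')`. The determinant is positive: `1 - t A²` is invertible for
`t ∈ [0, 1]` by the Neumann series, so `det (1 - t A²)` cannot change sign between `t = 0`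
and `t = 1`. The hafnian is a polynomial in the entries, and the product rule finishes. -/

theorem trace_adjugate_mul_eq_sum_det_updateCol {R ι : Type*} [CommRing R] [Fintype ι]
    [DecidableEq ι] (B B' : Matrix ι ι R) :
    (adjugate B * B').trace = ∑ i, (B.updateCol i fun k => B' k i).det := by
  refine Finset.sum_congr rfl fun i _ => ?_
  rw [← cramer_apply, cramer_eq_adjugate_mulVec]
  rfl

theorem trace_inv_one_sub_sq_mul_neg_add {R ι : Type*} [CommRing R] [Fintype ι] [DecidableEq ι]
    {A : Matrix ι ι R} (A' : Matrix ι ι R) (h : IsUnit (1 - A ^ 2).det) :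
    ((1 - A ^ 2)⁻¹ * -(A' * A + A * A')).trace = -(2 * (A * (1 - A ^ 2)⁻¹ * A').trace) := by
  have hcomm : Commute A (1 - A ^ 2)⁻¹ :=
    ((Commute.one_right A).sub_right (Commute.self_pow A 2)).units_inv_right
      (u := nonsingInvUnit _ h)
  rw [Matrix.mul_neg, Matrix.mul_add, trace_neg, trace_add, ← Matrix.mul_assoc, trace_mul_cycle,
    ← Matrix.mul_assoc, ← hcomm.eq]
  ring

theorem det_one_sub_pos_of_norm_lt_one {ι : Type*} [Fintype ι] [DecidableEq ι]
    {B : Matrix ι ι ℝ} (hB : ‖B‖ < 1) : 0 < (1 - B).det := by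
  by_contra! hle
  have hcont : ContinuousOn (fun t : ℝ => (1 - t • B).det) (Set.Icc 0 1) := by fun_prop
  obtain ⟨t, ⟨ht0, ht1⟩, hzero⟩ :=
    intermediate_value_Icc' zero_le_one hcont ⟨by simpa using hle, by simp⟩
  have htB : ‖t • B‖ < 1 := by
    rw [norm_smul, Real.norm_of_nonneg ht0]
    nlinarith [norm_nonneg B]
  exact ((isUnit_iff_isUnit_det _).mp (Units.oneSub _ htB).isUnit).ne_zero hzero

section EntrywiseDeriv

variable {𝕜 ι : Type*} [NontriviallyNormedField 𝕜] [Fintype ι]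

theorem hasDerivAt_matrix_mul_apply {B C : 𝕜 → Matrix ι ι 𝕜} {B' C' : Matrix ι ι 𝕜} {θ₀ : 𝕜}
    (hB : ∀ i j, HasDerivAt (fun θ => B θ i j) (B' i j) θ₀)
    (hC : ∀ i j, HasDerivAt (fun θ => C θ i j) (C' i j) θ₀) (i j : ι) :
    HasDerivAt (fun θ => (B θ * C θ) i j) ((B' * C θ₀ + B θ₀ * C') i j) θ₀ := by
  simp only [mul_apply, Matrix.add_apply, ← Finset.sum_add_distrib]
  exact HasDerivAt.fun_sum fun k _ => (hB i k).fun_mul (hC k j)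

theorem hasDerivAt_one_sub_sq_apply [DecidableEq ι] {A : 𝕜 → Matrix ι ι 𝕜} {A' : Matrix ι ι 𝕜}
    {θ₀ : 𝕜} (h : ∀ i j, HasDerivAt (fun θ => A θ i j) (A' i j) θ₀) (i j : ι) :
    HasDerivAt (fun θ => (1 - A θ ^ 2 : Matrix ι ι 𝕜) i j) ((-(A' * A θ₀ + A θ₀ * A')) i j) θ₀ := by
  simpa [sq] using
    (hasDerivAt_const θ₀ ((1 : Matrix ι ι 𝕜) i j)).fun_sub (hasDerivAt_matrix_mul_apply h h i j)

theorem hasDerivAt_det_eq_sum_det_updateCol [DecidableEq ι] {B : 𝕜 → Matrix ι ι 𝕜}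
    {B' : Matrix ι ι 𝕜} {θ₀ : 𝕜} (h : ∀ i j, HasDerivAt (fun θ => B θ i j) (B' i j) θ₀) :
    HasDerivAt (fun θ => (B θ).det) (∑ i, ((B θ₀).updateCol i fun k => B' k i).det) θ₀ := by
  simp only [det_apply', Finset.sum_comm (γ := ι), ← Finset.mul_sum]
  refine HasDerivAt.fun_sum fun σ _ => HasDerivAt.const_mul _ ?_
  convert HasDerivAt.fun_finsetProd (u := univ) fun i _ => h (σ i) i using 1
  refine Finset.sum_congr rfl fun i _ => ?_
  rw [← Finset.mul_prod_erase _ _ (Finset.mem_univ i), smul_eq_mul, mul_comm, updateCol_self]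
  congr 1
  exact Finset.prod_congr rfl fun j hj => updateCol_ne (Finset.ne_of_mem_erase hj)

theorem hasDerivAt_det [DecidableEq ι] {B : 𝕜 → Matrix ι ι 𝕜} {B' : Matrix ι ι 𝕜} {θ₀ : 𝕜}
    (h : ∀ i j, HasDerivAt (fun θ => B θ i j) (B' i j) θ₀) :
    HasDerivAt (fun θ => (B θ).det) (adjugate (B θ₀) * B').trace θ₀ := by
  rw [trace_adjugate_mul_eq_sum_det_updateCol]
  exact hasDerivAt_det_eq_sum_det_updateCol h

theorem differentiableAt_hafnian [LinearOrder ι] {B : 𝕜 → Matrix ι ι 𝕜} {θ₀ : 𝕜}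
    (h : ∀ i j, DifferentiableAt 𝕜 (fun θ => B θ i j) θ₀) :
    DifferentiableAt 𝕜 (fun θ => hafnian (B θ)) θ₀ := by
  unfold hafnian
  exact DifferentiableAt.fun_sum fun σ _ => DifferentiableAt.fun_finsetProd fun i _ => h _ _

end EntrywiseDeriv

theorem hasDerivAt_sqrt_det {ι : Type*} [Fintype ι] [DecidableEq ι] {B : ℝ → Matrix ι ι ℝ}
    {B' : Matrix ι ι ℝ} {θ₀ : ℝ} (h : ∀ i j, HasDerivAt (fun θ => B θ i j) (B' i j) θ₀)
    (hpos : 0 < (B θ₀).det) :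
    HasDerivAt (fun θ => Real.sqrt (B θ).det)
      (((B θ₀)⁻¹ * B').trace / 2 * Real.sqrt (B θ₀).det) θ₀ := by
  convert (hasDerivAt_det h).sqrt hpos.ne' using 1
  rw [nonsing_inv_apply _ hpos.ne'.isUnit, smul_mul, trace_smul, smul_eq_mul,
    Units.val_inv_eq_inv_val, IsUnit.unit_spec]
  have hsqrt_pos : 0 < Real.sqrt (B θ₀).det := Real.sqrt_pos.mpr hpos
  field_simp
  rw [Real.sq_sqrt hpos.le, mul_comm]

theorem hasDerivAt_pure_gbs_general {m : ℕ}
    (A : ℝ → Matrix (Fin m) (Fin m) ℝ) (A' : Matrix (Fin m) (Fin m) ℝ) (θ₀ : ℝ)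
    (hdiff : ∀ i j, HasDerivAt (fun θ => A θ i j) (A' i j) θ₀)
    (hnorm : ‖A θ₀‖ < 1) (n : Fin m → ℕ) :
    HasDerivAt
      (fun θ => Real.sqrt (1 - A θ ^ 2).det * hafnian (repMat (A θ) n) ^ 2 /
        ∏ i, (Nat.factorial (n i) : ℝ))
      (-Matrix.trace (A θ₀ * (1 - A θ₀ ^ 2)⁻¹ * A') *
          (Real.sqrt (1 - A θ₀ ^ 2).det * hafnian (repMat (A θ₀) n) ^ 2 /
            ∏ i, (Nat.factorial (n i) : ℝ)) +
        2 * (Real.sqrt (1 - A θ₀ ^ 2).det / ∏ i, (Nat.factorial (n i) : ℝ)) *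
          hafnian (repMat (A θ₀) n) *
          deriv (fun θ => hafnian (repMat (A θ) n)) θ₀) θ₀ := by
  have hpos : 0 < (1 - A θ₀ ^ 2).det := det_one_sub_pos_of_norm_lt_one <|
    (norm_pow_le' _ two_pos).trans_lt (pow_lt_one₀ (norm_nonneg _) hnorm two_ne_zero)
  have hsqrt := hasDerivAt_sqrt_det (hasDerivAt_one_sub_sq_apply hdiff) hpos
  rw [trace_inv_one_sub_sq_mul_neg_add A' hpos.ne'.isUnit] at hsqrt
  have hhaf := (differentiableAt_hafnian (B := fun θ => repMat (A θ) n)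
    fun p q => (hdiff _ _).differentiableAt).hasDerivAt
  refine ((hsqrt.fun_mul (hhaf.fun_pow 2)).div_const _).congr_deriv ?_
  norm_num
  ring

/-- for a family `A(θ)` of symmetric `m × m` matrices with entrywise derivative
`A'` at `θ₀` and `‖A(θ₀)‖ < 1` (L2 operator norm), the pure-state GBS probability
`P(θ, n̄) = det(I − A(θ)²)^{1/2} · Haf(A(θ)_n̄)² / (n̄!)` is differentiable at `θ₀` with
derivative `−Tr[A(I−A²)⁻¹A']·P(θ₀,n̄) + 2·det(I−A²)^{1/2}/(n̄!)·Haf(A_n̄)·(d/dθ Haf(A(θ)_n̄))|_{θ₀}`. -/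
theorem hasDerivAt_pure_gbs {m : ℕ}
    (A : ℝ → Matrix (Fin m) (Fin m) ℝ) (A' : Matrix (Fin m) (Fin m) ℝ) (θ₀ : ℝ)
    (hsymm : ∀ θ, (A θ).IsSymm)
    (hdiff : ∀ i j, HasDerivAt (fun θ => A θ i j) (A' i j) θ₀)
    (hnorm : ‖A θ₀‖ < 1) (n : Fin m → ℕ) :
    HasDerivAt
      (fun θ => Real.sqrt (1 - A θ ^ 2).det * hafnian (repMat (A θ) n) ^ 2 /
        ∏ i, (Nat.factorial (n i) : ℝ))
      (-Matrix.trace (A θ₀ * (1 - A θ₀ ^ 2)⁻¹ * A') *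
          (Real.sqrt (1 - A θ₀ ^ 2).det * hafnian (repMat (A θ₀) n) ^ 2 /
            ∏ i, (Nat.factorial (n i) : ℝ)) +
        2 * (Real.sqrt (1 - A θ₀ ^ 2).det / ∏ i, (Nat.factorial (n i) : ℝ)) *
          hafnian (repMat (A θ₀) n) *
          deriv (fun θ => hafnian (repMat (A θ) n)) θ₀) θ₀ :=
  hasDerivAt_pure_gbs_general A A' θ₀ hdiff hnorm n
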